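/- arXiv:2203.07121 — 2 statements merged into one kernel-verified Lean document; each statement's English description precedes it below -/
import Mathlib

section
/- Let T > 0, s > 0, p ∈ [1,∞), and set σ := ⌈T/s⌉. For b ∈ {0,1} and 0 ≤ t₁ ≤ … ≤ t_σ, let u_{b;t₁,…,t_σ} : [0,∞) → {0,1} be defined by u_{b;t₁,…,t_σ}(t) = b if |{i : t_i ≤ t}| is even and 1 − b otherwise. Define the minimum dwell time constraint set D_s ⊆ L^p(0,T) as the set of all u such that there exist b ∈ {0,1} and t₁,…,t_σ ≥ 0 with t_j − t_{j−1} ≥ s for j = 2,…,σ and u = u_{b;t₁,…,t_σ} almost everywhere on (0,T). Let I_i = (a_i,b_i), i = 1,…,M, be pairwise disjoint nonempty open subintervals of (0,T), define Π : L^p(0,T) → ℝ^M by Π(u)_i = (1/λ(I_i)) ∫_{I_i} u dλ, set C_{D_s,Π} := conv{Π(u) : u ∈ D_s}, and define S := [0,T] ∩ (⋃_{m∈ℤ} (m·s + E)) where E := {0,T} ∪ {a_i, b_i : i = 1,…,M}. Then for every extreme point v of C_{D_s,Π} there exist b ∈ {0,1} and t₁,…,t_σ ≥ 0 with t_j − t_{j−1}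 ≥ s for j = 2,…,σ such that the class of u_{b;t₁,…,t_σ} restricted to (0,T) satisfies Π(u_{b;t₁,…,t_σ}) = v and t_i ∈ S for every i with t_i ≤ T. -/
open MeasureTheory Set Filter
open scoped ENNReal

/-- The parametrized binary step function `u_{b;t₁,…,t_σ}`: it takes the value
`b` at `x` if the number of switching points `t_i ≤ x` is even, and `1 - b`
otherwise. -/
noncomputable def switchFun (σ : ℕ) (b : ℝ) (t : Fin σ → ℝ) : ℝ → ℝ :=
  fun x => if Even ((Finset.univ.filter fun i => t i ≤ x).card) then b else 1 - b

/-!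
Every projected control is a convex combination of projected controls whose switching times lie
on the grid `E + ℤ s`, `E = {0, T} ∪ {a_i, b_i}`, and the extreme points of a convex hull lie in
the generating set. To move an off-grid switching time `t_i`, shift all `t_j ≡ t_i [PMOD s]`
simultaneously by `θ`. As the grid is `s`-periodic, none of them meets `E` while `θ` ranges over
some `[-δL, δR]` with `δL, δR > 0`, so every component of `Π` is affine in `θ` there; the dwell
constraints survive because two consecutive times at distance exactly `s` move together. At
either endpoint `t_i` reaches the grid or a slack gap becomes tight, so induction on the number of
off-grid times plus slack gaps concludes.
-/

open AddCommGroup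

section SwitchFun

variable {σ : ℕ} {t : Fin σ → ℝ}

theorem Monotone.le_iff_lt_card_filter_le {α : Type*} [LinearOrder α] {t : Fin σ → α}
    (ht : Monotone t) (x : α) (j : Fin σ) :
    t j ≤ x ↔ (j : ℕ) < (Finset.univ.filter fun i => t i ≤ x).card := by
  constructor
  · intro hj
    calc (j : ℕ) < (Finset.Iic j).card := by simp
      _ ≤ _ := Finset.card_le_card fun k hk => by
        simp only [Finset.mem_Iic] at hk
        simpa using (ht hk).trans hj
  · intro hj
    by_contra! hxj
    have hsub : (Finset.univ.filter fun i => t i ≤ x) ⊆ Finset.Iio j := fun k hk => by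
      simp only [Finset.mem_filter, Finset.mem_univ, true_and] at hk
      simpa using lt_of_not_ge fun hjk => (hxj.trans_le (ht hjk)).not_ge hk
    simpa using (Finset.card_le_card hsub).trans_lt' hj

theorem switchFun_eq_sum (ht : Monotone t) (c x : ℝ) :
    switchFun σ c t x
      = c + (1 - 2 * c) * ∑ j : Fin σ, (-1) ^ (j : ℕ) * (Ici (t j)).indicator 1 x := by
  set N := (Finset.univ.filter fun i => t i ≤ x).card
  have hN : N ≤ σ := (Finset.card_filter_le _ _).trans_eq (Finset.card_fin σ)
  have hsum : ∑ j : Fin σ, (-1 : ℝ) ^ (j : ℕ) * (Ici (t j)).indicator 1 x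
      = ∑ k ∈ Finset.range N, (-1) ^ k := by
    have hj (j : Fin σ) : (Ici (t j)).indicator (1 : ℝ → ℝ) x = if (j : ℕ) < N then 1 else 0 := by
      simp only [indicator_apply, mem_Ici, Pi.one_apply]
      exact if_congr (ht.le_iff_lt_card_filter_le x j) rfl rfl
    simp only [hj]
    rw [Fin.sum_univ_eq_sum_range (fun k => (-1 : ℝ) ^ k * if k < N then 1 else 0),
      ← Finset.sum_range_add_sum_Ico _ hN, Finset.sum_eq_zero (s := Finset.Ico N σ)
        fun k hk => by simp [(Finset.mem_Ico.mp hk).1.not_gt], add_zero]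
    exact Finset.sum_congr rfl fun k hk => by simp [Finset.mem_range.mp hk]
  rw [hsum, neg_one_geom_sum, switchFun]
  split_ifs <;> ring

theorem integral_indicator_Ici_Ioo (a b τ : ℝ) :
    ∫ x in Ioo a b, (Ici τ).indicator (1 : ℝ → ℝ) x = max (b - max a τ) 0 := by
  rw [integral_indicator_one measurableSet_Ici, measureReal_restrict_apply measurableSet_Ici,
    ← measureReal_congr ((Ioi_ae_eq_Ici (μ := volume)).inter (ae_eq_refl (Ioo a b))),
    inter_comm, Ioo_inter_Ioi, Real.volume_real_Ioo]

theorem integral_switchFun (ht : Monotone t) (c a b : ℝ) :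
    ∫ x in Ioo a b, switchFun σ c t x
      = c * max (b - a) 0
        + (1 - 2 * c) * ∑ j : Fin σ, (-1) ^ (j : ℕ) * max (b - max a (t j)) 0 := by
  have hind (j : Fin σ) : IntegrableOn ((Ici (t j)).indicator (1 : ℝ → ℝ)) (Ioo a b) :=
    (integrableOn_const measure_Ioo_lt_top.ne).indicator measurableSet_Ici
  simp_rw [switchFun_eq_sum ht]
  rw [integral_add (integrableOn_const (C := c) measure_Ioo_lt_top.ne)
      ((integrable_finsetSum _ fun j _ => (hind j).const_mul _).const_mul _),
    integral_const_mul, integral_finsetSum _ fun j _ => (hind j).const_mul _, setIntegral_const,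
    Real.volume_real_Ioo, smul_eq_mul, mul_comm]
  simp_rw [integral_const_mul, integral_indicator_Ici_Ioo]

theorem max_sub_max_eq_convexComb {a b x y z α β : ℝ} (hxz : x ≤ z) (hzy : z ≤ y)
    (ha : a ∉ Ioo x y) (hb : b ∉ Ioo x y) (hαβ : α + β = 1) (hz : z = α * x + β * y) :
    max (b - max a z) 0 = α * max (b - max a x) 0 + β * max (b - max a y) 0 := by
  obtain ⟨k, l, hkl⟩ : ∃ k l : ℝ, ∀ τ ∈ Icc x y, max (b - max a τ) 0 = k * τ + l := by
    rw [mem_Ioo, not_and_or, not_lt, not_lt] at ha hb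
    rcases ha with hax | hya
    · rcases hb with hbx | hyb
      · refine ⟨0, 0, fun τ hτ => ?_⟩
        rw [max_eq_right (hax.trans hτ.1), max_eq_right (by linarith [hτ.1])]
        ring
      · refine ⟨-1, b, fun τ hτ => ?_⟩
        rw [max_eq_right (hax.trans hτ.1), max_eq_left (by linarith [hτ.2])]
        ring
    · refine ⟨0, max (b - a) 0, fun τ hτ => ?_⟩
      rw [max_eq_left (hτ.2.trans hya)]
      ring
  rw [hkl z ⟨hxz, hzy⟩, hkl x ⟨le_rfl, hxz.trans hzy⟩, hkl y ⟨hxz.trans hzy, le_rfl⟩, hz]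
  linear_combination -l * hαβ

theorem integral_switchFun_eq_convexComb {t₁ t₂ : Fin σ → ℝ} (ht : Monotone t)
    (ht₁ : Monotone t₁) (ht₂ : Monotone t₂) (c a b : ℝ) {α β : ℝ} (hαβ : α + β = 1)
    (h : ∀ j, max (b - max a (t j)) 0
      = α * max (b - max a (t₁ j)) 0 + β * max (b - max a (t₂ j)) 0) :
    ∫ x in Ioo a b, switchFun σ c t x
      = α * (∫ x in Ioo a b, switchFun σ c t₁ x) + β * ∫ x in Ioo a b, switchFun σ c t₂ x := by
  have hsum : ∑ j : Fin σ, (-1) ^ (j : ℕ) * max (b - max a (t j)) 0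
      = α * ∑ j : Fin σ, (-1) ^ (j : ℕ) * max (b - max a (t₁ j)) 0
        + β * ∑ j : Fin σ, (-1) ^ (j : ℕ) * max (b - max a (t₂ j)) 0 := by
    rw [Finset.mul_sum, Finset.mul_sum, ← Finset.sum_add_distrib]
    exact Finset.sum_congr rfl fun j _ => by rw [h j]; ring
  rw [integral_switchFun ht, integral_switchFun ht₁, integral_switchFun ht₂, hsum]
  linear_combination -(c * max (b - a) 0) * hαβ

theorem measurable_switchFun (c : ℝ) (t : Fin σ → ℝ) : Measurable (switchFun σ c t) := by
  have hcard : (fun x => (Finset.univ.filter fun i => t i ≤ x).card)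
      = fun x => ∑ i, (Ici (t i)).indicator (1 : ℝ → ℕ) x := by
    funext x
    rw [Finset.card_filter]
    rfl
  have : Measurable fun x => (Finset.univ.filter fun i => t i ≤ x).card := by
    rw [hcard]
    exact Finset.measurable_sum _ fun i _ => measurable_const.indicator measurableSet_Ici
  exact (measurable_from_nat (f := fun n => if Even n then c else 1 - c)).comp this

end SwitchFun

theorem exists_first_modEq_hit {s : ℝ} (hs : 0 < s) (x : ℝ) {E S : Set ℝ} (hE : E.Finite)
    (hE₀ : E.Nonempty) (hS : S.Finite) (hSpos : ∀ d ∈ S, 0 < d) :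
    ∃ δ > 0, (∀ θ ∈ Ioo 0 δ, ∀ e ∈ E, ¬ e ≡ x + θ [PMOD s]) ∧ (∀ d ∈ S, δ ≤ d) ∧
      ((∃ e ∈ E, e ≡ x + δ [PMOD s]) ∨ δ ∈ S) := by
  -- `toIocMod hs 0 (e - x)` is the least `θ > 0` with `x + θ ≡ e [PMOD s]`
  set D := (fun e => toIocMod hs 0 (e - x)) '' E ∪ S
  obtain ⟨δ, hδD, hmin⟩ := D.exists_min_image id ((hE.image _).union hS)
    ((hE₀.image _).mono subset_union_left)
  have hδE (e : ℝ) (he : e ∈ E) : δ ≤ toIocMod hs 0 (e - x) := hmin _ (.inl ⟨e, he, rfl⟩)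
  refine ⟨δ, ?_, fun θ hθ e he hex => ?_, fun d hd => hmin d (.inr hd), ?_⟩
  · rcases hδD with ⟨e, -, rfl⟩ | hδS
    · exact (toIocMod_mem_Ioc hs 0 _).1
    · exact hSpos δ hδS
  · have hθs : θ ≤ s := (hθ.2.trans_le (hδE e he)).le.trans (by
      simpa using (toIocMod_mem_Ioc hs 0 (e - x)).2)
    have hmod : toIocMod hs 0 (e - x) = θ := by
      rw [← (toIocMod_eq_self hs).mpr ⟨hθ.1, by simpa using hθs⟩, toIocMod_eq_toIocMod]
      obtain ⟨n, hn⟩ := (modEq_iff_zsmul'.mp hex)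
      exact ⟨n, by rw [← hn]; ring⟩
    linarith [hδE e he, hθ.2]
  · rcases hδD with ⟨e, he, rfl⟩ | hδS
    · refine .inl ⟨e, he, modEq_iff_zsmul'.mpr ⟨-toIocDiv hs 0 (e - x), ?_⟩⟩
      rw [neg_smul, ← self_sub_toIocMod hs 0 (e - x)]
      ring
    · exact .inr hδS

theorem exists_last_modEq_hit {s : ℝ} (hs : 0 < s) (x : ℝ) {E S : Set ℝ} (hE : E.Finite)
    (hE₀ : E.Nonempty) (hS : S.Finite) (hSpos : ∀ d ∈ S, 0 < d) :
    ∃ δ > 0, (∀ θ ∈ Ioo 0 δ, ∀ e ∈ E, ¬ e ≡ x - θ [PMOD s]) ∧ (∀ d ∈ S, δ ≤ d) ∧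
      ((∃ e ∈ E, e ≡ x - δ [PMOD s]) ∨ δ ∈ S) := by
  obtain ⟨δ, hδ, hno, hle, hhit⟩ :=
    exists_first_modEq_hit hs (-x) hE.neg (by simpa using hE₀.neg) hS hSpos
  have hneg (e θ : ℝ) : -e ≡ -x + θ [PMOD s] ↔ e ≡ x - θ [PMOD s] := by
    rw [← neg_modEq_neg, neg_neg, neg_add, neg_neg, sub_eq_add_neg]
  refine ⟨δ, hδ, fun θ hθ e he => ?_, hle, hhit.imp (fun ⟨e, he, h⟩ => ⟨-e, he, ?_⟩) id⟩
  · exact (hneg e θ).not.mp (hno θ hθ (-e) (by simpa using he))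
  · rwa [← hneg, neg_neg]

namespace DwellTime

variable {σ M : ℕ} {s : ℝ} {E : Set ℝ} {t : Fin σ → ℝ} {i : Fin σ} {A B : Fin M → ℝ}

def DwellFeasible (s : ℝ) (t : Fin σ → ℝ) : Prop :=
  (∀ i, 0 ≤ t i) ∧ ∀ i i' : Fin σ, (i : ℕ) + 1 = (i' : ℕ) → s ≤ t i' - t i

theorem DwellFeasible.monotone (hs : 0 ≤ s) (ht : DwellFeasible s t) : Monotone t := by
  cases σ with
  | zero => exact fun a => a.elim0
  | succ n =>
    refine Fin.monotone_iff_le_succ.mpr fun j => ?_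
    linarith [ht.2 j.castSucc j.succ rfl]

def slackGaps (s : ℝ) (t : Fin σ → ℝ) : Set (Fin σ × Fin σ) :=
  {p | (p.1 : ℕ) + 1 = p.2 ∧ s < t p.2 - t p.1}

def offGrid (s : ℝ) (E : Set ℝ) (t : Fin σ → ℝ) : Set (Fin σ) :=
  {j | ∀ e ∈ E, ¬ e ≡ t j [PMOD s]}

noncomputable def defect (s : ℝ) (E : Set ℝ) (t : Fin σ → ℝ) : ℕ :=
  (offGrid s E t).ncard + (slackGaps s t).ncard

open Classical in
noncomputable def shiftClass (s : ℝ) (t : Fin σ → ℝ) (i : Fin σ) (θ : ℝ) : Fin σ → ℝ :=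
  fun j => if t j ≡ t i [PMOD s] then t j + θ else t j

theorem shiftClass_of_modEq {θ : ℝ} {j : Fin σ} (h : t j ≡ t i [PMOD s]) :
    shiftClass s t i θ j = t j + θ := by
  simp [shiftClass, h]

theorem shiftClass_of_not_modEq {θ : ℝ} {j : Fin σ} (h : ¬ t j ≡ t i [PMOD s]) :
    shiftClass s t i θ j = t j := by
  simp [shiftClass, h]

theorem lt_sub_of_not_modEq_iff {a b c : ℝ} (hab : s ≤ b - a)
    (h : ¬ (a ≡ c [PMOD s] ↔ b ≡ c [PMOD s])) : s < b - a :=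
  hab.lt_of_ne fun h' =>
    have hab : a ≡ b [PMOD s] := h' ▸ modEq_sub a b
    h ⟨hab.symm.trans, hab.trans⟩

theorem slackGaps_shiftClass_subset (hgap : ∀ j j' : Fin σ, (j : ℕ) + 1 = j' → s ≤ t j' - t j)
    (θ : ℝ) : slackGaps s (shiftClass s t i θ) ⊆ slackGaps s t := by
  rintro ⟨j, j'⟩ ⟨hjj', hslack⟩
  refine ⟨hjj', ?_⟩
  dsimp only at hjj' hslack ⊢
  by_cases hj : t j ≡ t i [PMOD s] <;> by_cases hj' : t j' ≡ t i [PMOD s]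
  · rw [shiftClass_of_modEq hj, shiftClass_of_modEq hj'] at hslack; linarith
  · exact lt_sub_of_not_modEq_iff (hgap j j' hjj') (by tauto)
  · exact lt_sub_of_not_modEq_iff (hgap j j' hjj') (by tauto)
  · rwa [shiftClass_of_not_modEq hj, shiftClass_of_not_modEq hj'] at hslack

theorem offGrid_shiftClass_subset (hi : i ∈ offGrid s E t) (θ : ℝ) :
    offGrid s E (shiftClass s t i θ) ⊆ offGrid s E t := by
  intro j hj
  by_cases hC : t j ≡ t i [PMOD s]
  · exact fun e he he' => hi e he (he'.trans hC)
  · rwa [offGrid, mem_ofPred_eq, shiftClass_of_not_modEq hC] at hj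

theorem defect_shiftClass_lt (hgap : ∀ j j' : Fin σ, (j : ℕ) + 1 = j' → s ≤ t j' - t j)
    (hi : i ∈ offGrid s E t) {θ : ℝ}
    (hθ : (∃ e ∈ E, e ≡ t i + θ [PMOD s]) ∨
      ∃ p ∈ slackGaps s t, p ∉ slackGaps s (shiftClass s t i θ)) :
    defect s E (shiftClass s t i θ) < defect s E t := by
  have hoff := offGrid_shiftClass_subset hi θ
  have hslack := slackGaps_shiftClass_subset hgap (i := i) θ
  rcases hθ with ⟨e, he, hhit⟩ | ⟨p, hp, hp'⟩
  · have hi' : i ∉ offGrid s E (shiftClass s t i θ) := fun h =>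
      h e he (by rwa [shiftClass_of_modEq (AddCommGroup.modEq_refl _)])
    exact add_lt_add_of_lt_of_le
      (ncard_lt_ncard ((ssubset_iff_of_subset hoff).mpr ⟨i, hi, hi'⟩)) (ncard_le_ncard hslack)
  · exact add_lt_add_of_le_of_lt (ncard_le_ncard hoff)
      (ncard_lt_ncard ((ssubset_iff_of_subset hslack).mpr ⟨p, hp, hp'⟩))

theorem DwellFeasible.shiftClass (ht : DwellFeasible s t) {θ : ℝ}
    (hnonneg : ∀ j, t j ≡ t i [PMOD s] → 0 ≤ t j + θ)
    (hright : ∀ j j' : Fin σ, (j : ℕ) + 1 = j' → t j ≡ t i [PMOD s] → ¬ t j' ≡ t i [PMOD s] →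
      θ ≤ t j' - t j - s)
    (hleft : ∀ j j' : Fin σ, (j : ℕ) + 1 = j' → ¬ t j ≡ t i [PMOD s] → t j' ≡ t i [PMOD s] →
      -θ ≤ t j' - t j - s) :
    DwellFeasible s (shiftClass s t i θ) := by
  refine ⟨fun j => ?_, fun j j' hjj' => ?_⟩
  · by_cases hj : t j ≡ t i [PMOD s]
    · rw [shiftClass_of_modEq hj]; exact hnonneg j hj
    · rw [shiftClass_of_not_modEq hj]; exact ht.1 j
  · have := ht.2 j j' hjj'
    by_cases hj : t j ≡ t i [PMOD s] <;> by_cases hj' : t j' ≡ t i [PMOD s]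
    · rw [shiftClass_of_modEq hj, shiftClass_of_modEq hj']; linarith
    · rw [shiftClass_of_modEq hj, shiftClass_of_not_modEq hj']; linarith [hright j j' hjj' hj hj']
    · rw [shiftClass_of_not_modEq hj, shiftClass_of_modEq hj']; linarith [hleft j j' hjj' hj hj']
    · rwa [shiftClass_of_not_modEq hj, shiftClass_of_not_modEq hj']

theorem notMem_Ioo_of_modEq (hi : i ∈ offGrid s E t) {j : Fin σ} (hj : t j ≡ t i [PMOD s])
    {δL δR : ℝ} (hL : ∀ θ ∈ Ioo 0 δL, ∀ e ∈ E, ¬ e ≡ t i - θ [PMOD s])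
    (hR : ∀ θ ∈ Ioo 0 δR, ∀ e ∈ E, ¬ e ≡ t i + θ [PMOD s]) {e : ℝ} (he : e ∈ E) :
    e ∉ Ioo (t j - δL) (t j + δR) := by
  rintro ⟨h₁, h₂⟩
  rcases lt_trichotomy e (t j) with hlt | rfl | hgt
  · refine hL (t j - e) ⟨by linarith, by linarith⟩ e he ?_
    simpa only [sub_sub_cancel] using hj.sub_right (t j - e)
  · exact hi _ he hj
  · refine hR (e - t j) ⟨by linarith, by linarith⟩ e he ?_
    simpa only [add_sub_cancel] using hj.add_right (e - t j)

theorem exists_shiftClass_of_mem_offGrid (hs : 0 < s) (hE : E.Finite) (h0 : 0 ∈ E)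
    (ht : DwellFeasible s t) (hi : i ∈ offGrid s E t) :
    ∃ δL > 0, ∃ δR > 0,
      (∀ j, t j ≡ t i [PMOD s] → ∀ e ∈ E, e ∉ Ioo (t j - δL) (t j + δR)) ∧
      DwellFeasible s (shiftClass s t i (-δL)) ∧ DwellFeasible s (shiftClass s t i δR) ∧
      defect s E (shiftClass s t i (-δL)) < defect s E t ∧
      defect s E (shiftClass s t i δR) < defect s E t := by
  have hbdry (j j' : Fin σ) (h : (j : ℕ) + 1 = j')
      (hC : ¬ (t j ≡ t i [PMOD s] ↔ t j' ≡ t i [PMOD s])) : s < t j' - t j :=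
    lt_sub_of_not_modEq_iff (ht.2 j j' h) hC
  let slack (p : Fin σ × Fin σ) : ℝ := t p.2 - t p.1 - s
  let R := {p : Fin σ × Fin σ | (p.1 : ℕ) + 1 = p.2 ∧ t p.1 ≡ t i [PMOD s] ∧ ¬ t p.2 ≡ t i [PMOD s]}
  let L := {p : Fin σ × Fin σ | (p.1 : ℕ) + 1 = p.2 ∧ ¬ t p.1 ≡ t i [PMOD s] ∧ t p.2 ≡ t i [PMOD s]}
  obtain ⟨δR, hδR, hnoR, hleR, hhitR⟩ := exists_first_modEq_hit hs (t i) hE ⟨0, h0⟩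
    ((toFinite R).image slack)
    (by rintro _ ⟨p, ⟨h, hj, hj'⟩, rfl⟩; linarith [hbdry p.1 p.2 h (by tauto)])
  obtain ⟨δL, hδL, hnoL, hleL, hhitL⟩ := exists_last_modEq_hit hs (t i) hE ⟨0, h0⟩
    ((toFinite L).image slack)
    (by rintro _ ⟨p, ⟨h, hj, hj'⟩, rfl⟩; linarith [hbdry p.1 p.2 h (by tauto)])
  have htouch (j : Fin σ) (hj : t j ≡ t i [PMOD s]) (e : ℝ) (he : e ∈ E) :
      e ∉ Ioo (t j - δL) (t j + δR) := notMem_Ioo_of_modEq hi hj hnoL hnoR he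
  refine ⟨δL, hδL, δR, hδR, htouch, ?_, ?_, defect_shiftClass_lt ht.2 hi ?_,
    defect_shiftClass_lt ht.2 hi (hhitR.imp id ?_)⟩
  · refine ht.shiftClass (fun j hj => ?_) (fun j j' h hj hj' => ?_)
      (fun j j' h hj hj' => (neg_neg δL).symm ▸ hleL _ ⟨(j, j'), ⟨h, hj, hj'⟩, rfl⟩)
    · by_contra hneg
      exact htouch j hj 0 h0 ⟨by linarith, by linarith [ht.1 j]⟩
    · linarith [hbdry j j' h (by tauto)]
  · refine ht.shiftClass (fun j _ => by linarith [ht.1 j])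
      (fun j j' h hj hj' => hleR _ ⟨(j, j'), ⟨h, hj, hj'⟩, rfl⟩) (fun j j' h hj hj' => ?_)
    linarith [hbdry j j' h (by tauto)]
  · rcases hhitL with ⟨e, he, hhit⟩ | ⟨⟨j, j'⟩, ⟨h, hj, hj'⟩, rfl⟩
    · exact .inl ⟨e, he, by rwa [← sub_eq_add_neg]⟩
    · refine .inr ⟨(j, j'), ⟨h, hbdry j j' h (by tauto)⟩, fun ⟨_, hlt⟩ => ?_⟩
      rw [shiftClass_of_not_modEq hj, shiftClass_of_modEq hj'] at hlt
      linarith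
  · rintro ⟨⟨j, j'⟩, ⟨h, hj, hj'⟩, rfl⟩
    refine ⟨(j, j'), ⟨h, hbdry j j' h (by tauto)⟩, fun ⟨_, hlt⟩ => ?_⟩
    rw [shiftClass_of_modEq hj, shiftClass_of_not_modEq hj'] at hlt
    linarith

noncomputable def dwellProj (A B : Fin M → ℝ) (σ : ℕ) (c : ℝ) (t : Fin σ → ℝ) : Fin M → ℝ :=
  fun m => (B m - A m)⁻¹ * ∫ x in Ioo (A m) (B m), switchFun σ c t x

theorem dwellProj_mem_segment_shiftClass (c : ℝ) {δL δR : ℝ} (hδL : 0 < δL) (hδR : 0 < δR)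
    (ht : Monotone t) (htL : Monotone (shiftClass s t i (-δL)))
    (htR : Monotone (shiftClass s t i δR))
    (hA : ∀ j, t j ≡ t i [PMOD s] → ∀ m, A m ∉ Ioo (t j - δL) (t j + δR))
    (hB : ∀ j, t j ≡ t i [PMOD s] → ∀ m, B m ∉ Ioo (t j - δL) (t j + δR)) :
    dwellProj A B σ c t ∈ segment ℝ (dwellProj A B σ c (shiftClass s t i (-δL)))
      (dwellProj A B σ c (shiftClass s t i δR)) := by
  have hαβ : δR / (δL + δR) + δL / (δL + δR) = 1 := by field_simp; ring
  refine ⟨δR / (δL + δR), δL / (δL + δR), by positivity, by positivity, hαβ, funext fun m => ?_⟩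
  simp only [Pi.add_apply, Pi.smul_apply, smul_eq_mul, dwellProj]
  rw [integral_switchFun_eq_convexComb ht htL htR c _ _ hαβ fun j => ?_]
  · ring
  by_cases hj : t j ≡ t i [PMOD s]
  · rw [shiftClass_of_modEq hj, shiftClass_of_modEq hj, ← sub_eq_add_neg]
    exact max_sub_max_eq_convexComb (by linarith) (by linarith) (hA j hj m) (hB j hj m) hαβ
      (by field_simp; ring)
  · rw [shiftClass_of_not_modEq hj, shiftClass_of_not_modEq hj, ← add_mul, hαβ, one_mul]

theorem dwellProj_mem_convexHull (hs : 0 < s) (hE : E.Finite) (h0 : 0 ∈ E)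
    (hA : ∀ m, A m ∈ E) (hB : ∀ m, B m ∈ E) (c : ℝ) (ht : DwellFeasible s t) :
    dwellProj A B σ c t ∈ convexHull ℝ
      (dwellProj A B σ c '' {t | DwellFeasible s t ∧ ∀ j, ∃ e ∈ E, e ≡ t j [PMOD s]}) := by
  induction hn : defect s E t using Nat.strong_induction_on generalizing t with
  | _ n ih =>
  by_cases hgrid : ∀ j, ∃ e ∈ E, e ≡ t j [PMOD s]
  · exact subset_convexHull ℝ _ ⟨t, ⟨ht, hgrid⟩, rfl⟩
  push Not at hgrid
  obtain ⟨i, hi⟩ := hgrid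
  obtain ⟨δL, hδL, δR, hδR, htouch, htL, htR, hdL, hdR⟩ :=
    exists_shiftClass_of_mem_offGrid hs hE h0 ht hi
  exact (convex_convexHull ℝ _).segment_subset (ih _ (hn ▸ hdL) htL rfl) (ih _ (hn ▸ hdR) htR rfl)
    (dwellProj_mem_segment_shiftClass c hδL hδR (ht.monotone hs.le) (htL.monotone hs.le)
      (htR.monotone hs.le) (fun j hj m => htouch j hj _ (hA m))
      (fun j hj m => htouch j hj _ (hB m)))

theorem dwellProj_eq_of_ae_eq {U : Set ℝ} (hsub : ∀ m, Ioo (A m) (B m) ⊆ U) {u : ℝ → ℝ} {c : ℝ}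
    (hu : u =ᵐ[volume.restrict U] switchFun σ c t) :
    (fun m => (B m - A m)⁻¹ * ∫ x in Ioo (A m) (B m), u x ∂(volume.restrict U))
      = dwellProj A B σ c t := by
  funext m
  rw [Measure.restrict_restrict_of_subset (hsub m),
    integral_congr_ae (ae_restrict_of_ae_restrict_of_subset (hsub m) hu)]
  rfl

end DwellTime

open DwellTime

theorem exists_Lp_ae_eq_switchFun {μ : Measure ℝ} [IsFiniteMeasure μ] (p : ℝ≥0∞) (σ : ℕ) (c : ℝ)
    (t : Fin σ → ℝ) : ∃ u : Lp ℝ p μ, u =ᵐ[μ] switchFun σ c t := by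
  have hbound (x : ℝ) : ‖switchFun σ c t x‖ ≤ max |c| |1 - c| := by
    unfold switchFun
    split_ifs <;> simp
  have hmem := MemLp.of_bound (p := p) (μ := μ) (measurable_switchFun c t).aestronglyMeasurable _
    (Eventually.of_forall hbound)
  exact ⟨hmem.toLp, hmem.coeFn_toLp⟩

theorem mem_iUnion_image_add_iff_modEq {s x : ℝ} {E : Set ℝ} :
    x ∈ ⋃ m : ℤ, (fun y => (m : ℝ) * s + y) '' E ↔ ∃ e ∈ E, e ≡ x [PMOD s] := by
  simp only [mem_iUnion, mem_image, modEq_iff_zsmul', zsmul_eq_mul]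
  constructor
  · rintro ⟨m, e, he, rfl⟩
    exact ⟨e, he, m, by ring⟩
  · rintro ⟨e, he, m, hm⟩
    exact ⟨m, e, he, by linarith⟩

theorem mem_of_mem_extremePoints_convexHull {F : Type*} [AddCommGroup F] [Module ℝ F]
    {V X : Set F} (hXV : X ⊆ convexHull ℝ V) (hVX : V ⊆ X) {v : F}
    (hv : v ∈ extremePoints ℝ (convexHull ℝ X)) : v ∈ V := by
  rw [(convexHull_min hXV (convex_convexHull ℝ V)).antisymm (convexHull_mono hVX)] at hv
  exact extremePoints_convexHull_subset hv

theorem stmt_16_general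
    (T s : ℝ) (hs : 0 < s) (p : ℝ≥0∞)
    (M : ℕ) (A B : Fin M → ℝ)
    (hsub : ∀ i, Ioo (A i) (B i) ⊆ Ioo (0:ℝ) T) :
    ∀ v ∈ Set.extremePoints ℝ (convexHull ℝ
        ((fun u : Lp ℝ p (volume.restrict (Ioo (0:ℝ) T)) =>
            fun i : Fin M => (B i - A i)⁻¹ *
              ∫ x in Ioo (A i) (B i), (u : ℝ → ℝ) x
                ∂(volume.restrict (Ioo (0:ℝ) T))) ''
          {u : Lp ℝ p (volume.restrict (Ioo (0:ℝ) T)) |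
            ∃ c : ℝ, (c = 0 ∨ c = 1) ∧ ∃ t : Fin (⌈T / s⌉₊) → ℝ,
              (∀ i, 0 ≤ t i) ∧
              (∀ i i' : Fin (⌈T / s⌉₊), (i : ℕ) + 1 = (i' : ℕ) → s ≤ t i' - t i) ∧
              (u : ℝ → ℝ) =ᵐ[volume.restrict (Ioo (0:ℝ) T)]
                switchFun (⌈T / s⌉₊) c t})),
      ∃ c : ℝ, (c = 0 ∨ c = 1) ∧ ∃ t : Fin (⌈T / s⌉₊) → ℝ,
        (∀ i, 0 ≤ t i) ∧
        (∀ i i' : Fin (⌈T / s⌉₊), (i : ℕ) + 1 = (i' : ℕ) → s ≤ t i' - t i) ∧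
        (fun i : Fin M => (B i - A i)⁻¹ *
            ∫ x in Ioo (A i) (B i), switchFun (⌈T / s⌉₊) c t x) = v ∧
        ∀ i, t i ≤ T → t i ∈
          Icc (0:ℝ) T ∩ ⋃ (m : ℤ), (fun x => (m : ℝ) * s + x) ''
            ({0, T} ∪ (Set.range A ∪ Set.range B)) := by
  intro v hv
  set E : Set ℝ := {0, T} ∪ (range A ∪ range B)
  set V := {w | ∃ c : ℝ, (c = 0 ∨ c = 1) ∧
    w ∈ dwellProj A B ⌈T / s⌉₊ c '' {t | DwellFeasible s t ∧ ∀ j, ∃ e ∈ E, e ≡ t j [PMOD s]}}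
  have hvV : v ∈ V := by
    refine mem_of_mem_extremePoints_convexHull ?_ ?_ hv
    · rintro _ ⟨u, ⟨c, hc, t, h0, hgap, hu⟩, rfl⟩
      beta_reduce
      rw [dwellProj_eq_of_ae_eq hsub hu]
      refine convexHull_mono (fun w hw => ?_) (dwellProj_mem_convexHull hs (toFinite E)
        (by simp [E]) (fun m => by simp [E]) (fun m => by simp [E]) c ⟨h0, hgap⟩)
      exact ⟨c, hc, hw⟩
    · rintro _ ⟨c, hc, t, ⟨ht, -⟩, rfl⟩
      obtain ⟨u, hu⟩ := exists_Lp_ae_eq_switchFun (μ := volume.restrict (Ioo 0 T)) p _ c t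
      exact ⟨u, ⟨c, hc, t, ht.1, ht.2, hu⟩, dwellProj_eq_of_ae_eq hsub hu⟩
  obtain ⟨c, hc, t, ⟨ht, hgrid⟩, rfl⟩ := hvV
  exact ⟨c, hc, t, ht.1, ht.2, rfl,
    fun j hj => ⟨⟨ht.1 j, hj⟩, mem_iUnion_image_add_iff_modEq.mpr (hgrid j)⟩⟩

/-- Lemma 3.9: every extreme point of the projected dwell-time
polytope `C_{D_s,Π}` is the projection of a feasible control all of whose
switching points lying in `[0,T]` belong to the finite grid
`S = [0,T] ∩ (ℤ·s + ({0,T} ∪ {a_i, b_i}))`. -/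
theorem stmt_16
    (T s : ℝ) (hT : 0 < T) (hs : 0 < s) (p : ℝ≥0∞) [Fact (1 ≤ p)] (hp : p ≠ ⊤)
    (M : ℕ) (A B : Fin M → ℝ) (hAB : ∀ i, A i < B i)
    (hsub : ∀ i, Ioo (A i) (B i) ⊆ Ioo (0:ℝ) T)
    (hdisj : ∀ i i' : Fin M, i ≠ i' →
      Disjoint (Ioo (A i) (B i)) (Ioo (A i') (B i'))) :
    ∀ v ∈ Set.extremePoints ℝ (convexHull ℝ
        ((fun u : Lp ℝ p (volume.restrict (Ioo (0:ℝ) T)) =>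
            fun i : Fin M => (B i - A i)⁻¹ *
              ∫ x in Ioo (A i) (B i), (u : ℝ → ℝ) x
                ∂(volume.restrict (Ioo (0:ℝ) T))) ''
          {u : Lp ℝ p (volume.restrict (Ioo (0:ℝ) T)) |
            ∃ c : ℝ, (c = 0 ∨ c = 1) ∧ ∃ t : Fin (⌈T / s⌉₊) → ℝ,
              (∀ i, 0 ≤ t i) ∧
              (∀ i i' : Fin (⌈T / s⌉₊), (i : ℕ) + 1 = (i' : ℕ) → s ≤ t i' - t i) ∧
              (u : ℝ → ℝ) =ᵐ[volume.restrict (Ioo (0:ℝ) T)]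
                switchFun (⌈T / s⌉₊) c t})),
      ∃ c : ℝ, (c = 0 ∨ c = 1) ∧ ∃ t : Fin (⌈T / s⌉₊) → ℝ,
        (∀ i, 0 ≤ t i) ∧
        (∀ i i' : Fin (⌈T / s⌉₊), (i : ℕ) + 1 = (i' : ℕ) → s ≤ t i' - t i) ∧
        (fun i : Fin M => (B i - A i)⁻¹ *
            ∫ x in Ioo (A i) (B i), switchFun (⌈T / s⌉₊) c t x) = v ∧
        ∀ i, t i ≤ T → t i ∈
          Icc (0:ℝ) T ∩ ⋃ (m : ℤ), (fun x => (m : ℝ) * s + x) ''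
            ({0, T} ∪ (Set.range A ∪ Set.range B)) :=
  stmt_16_general T s hs p M A B hsub
end

section
/- Let T = 3, s = 3/2, σ = 2, p ∈ [1,∞), and let I_j = (j−1, j) for j = 1,2,3. For b ∈ {0,1} and 0 ≤ t₁ ≤ t₂, let u_{b;t₁,t₂} : [0,∞) → {0,1} be defined by u_{b;t₁,t₂}(t) = b if |{i ∈ {1,2} : t_i ≤ t}| is even and 1 − b otherwise. Let D_s ⊆ L^p(0,3) be the set of all u such that there exist b ∈ {0,1} and t₁, t₂ ≥ 0 with t₂ − t₁ ≥ 3/2 and u = u_{b;t₁,t₂} almost everywhere on (0,3), define Π(u) = (∫_{j−1}^{j} u dλ)_{j=1}^3 ∈ ℝ³, and set C_{D_s,Π} := conv{Π(u) : u ∈ D_s}. Then the point (0, 1, 1/2) belongs to C_{D_s,Π} and is the unique minimizer of the linear functional x ↦ x₁ − x₂ + (1/2)·x₃ over C_{D_s,Π}; in particular, C_{D_s,Π} has a fractional vertex and is not a 0/1-polytope. -/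
/-!
For `u = u_{b;t₁,t₂}` the projection is `Π(u)_j = b + (1 - 2b)·|[t₁,t₂) ∩ I_j|`. With `t₁ ≥ 0` and
`t₂ - t₁ ≥ 3/2`, a case analysis on the position of `t₁, t₂` relative to `1, 2, 3` shows that the
objective `x₁ - x₂ + x₃/2` is at least `-3/4` on these points, with equality only for `b = 0`,
`t₁ = 1`, `t₂ = 5/2`, whose image is `(0, 1, 1/2)`. A unique minimizer of a linear functional
on a set stays one on its convex hull, so `(0, 1, 1/2)` is an exposed, hence extreme, point of
`C_{D_s,Π}`; an extreme point of the convex hull of a finite set of 0/1 vectors would be one of them.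
-/

open MeasureTheory Set Filter
open scoped ENNReal

/-- The minimum dwell time constraint set `D_s` for `T = 3`, `s = 3/2`,
`σ = 2` in `L^p(0,3)`. -/
def dwellSet (p : ℝ≥0∞) : Set (Lp ℝ p (volume.restrict (Ioo (0:ℝ) 3))) :=
  {u | ∃ c : ℝ, (c = 0 ∨ c = 1) ∧ ∃ t : Fin 2 → ℝ,
    (∀ i, 0 ≤ t i) ∧ (3/2 : ℝ) ≤ t 1 - t 0 ∧
    (u : ℝ → ℝ) =ᵐ[volume.restrict (Ioo (0:ℝ) 3)] switchFun 2 c t}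

/-- The projection `Π(u) = (∫_{j-1}^{j} u dλ)_{j=1}^3` on `L^p(0,3)`. -/
noncomputable def proj3 (p : ℝ≥0∞)
    (u : Lp ℝ p (volume.restrict (Ioo (0:ℝ) 3))) : Fin 3 → ℝ :=
  fun j => ∫ x in Ioo ((j:ℕ):ℝ) (((j:ℕ):ℝ) + 1), (u : ℝ → ℝ) x
    ∂(volume.restrict (Ioo (0:ℝ) 3))

lemma switchFun_two_eq (c : ℝ) {t : Fin 2 → ℝ} (ht : t 0 ≤ t 1) :
    switchFun 2 c t = fun x => c + (1 - 2 * c) * (Ico (t 0) (t 1)).indicator 1 x := by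
  funext x
  simp only [switchFun, Finset.card_filter, Fin.sum_univ_two, indicator_apply, mem_Ico,
    Pi.one_apply]
  by_cases h0 : t 0 ≤ x <;> by_cases h1 : t 1 ≤ x
  · simp [h0, h1]
  · simp [h0, h1, not_le.mp h1]; ring
  · exact absurd (ht.trans h1) h0
  · simp [h0, h1]

noncomputable def overlap (a b l r : ℝ) : ℝ := max (min b r - max a l) 0

lemma setIntegral_Ioo_indicator_Ico (a b l r : ℝ) :
    ∫ x in Ioo l r, (Ico a b).indicator 1 x = overlap a b l r := by
  rw [integral_indicator_one measurableSet_Ico, measureReal_restrict_apply measurableSet_Ico,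
    measureReal_congr (ae_eq_refl (Ico a b) |>.inter Ioo_ae_eq_Ico), Ico_inter_Ico,
    Real.volume_real_Ico]
  rfl

lemma setIntegral_Ioo_switchFun_two (c : ℝ) {t : Fin 2 → ℝ} (ht : t 0 ≤ t 1) {l r : ℝ}
    (hlr : l ≤ r) :
    ∫ x in Ioo l r, switchFun 2 c t x = c * (r - l) + (1 - 2 * c) * overlap (t 0) (t 1) l r := by
  have hfin : volume (Ioo l r) ≠ ⊤ := measure_Ioo_lt_top.ne
  have hconst : Integrable (fun _ => c) (volume.restrict (Ioo l r)) := integrableOn_const hfin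
  have hind : Integrable ((Ico (t 0) (t 1)).indicator 1) (volume.restrict (Ioo l r)) :=
    (integrableOn_const (C := (1 : ℝ)) hfin).indicator measurableSet_Ico
  rw [switchFun_two_eq c ht, integral_add hconst (hind.const_mul _), integral_const_mul,
    setIntegral_const, setIntegral_Ioo_indicator_Ico, Real.volume_real_Ioo_of_le hlr,
    smul_eq_mul, mul_comm c]

lemma proj3_apply_of_ae_eq {p : ℝ≥0∞} {u : Lp ℝ p (volume.restrict (Ioo (0:ℝ) 3))} {f : ℝ → ℝ}
    (hu : (u : ℝ → ℝ) =ᵐ[volume.restrict (Ioo (0:ℝ) 3)] f) (j : Fin 3) :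
    proj3 p u j = ∫ x in Ioo ((j:ℕ):ℝ) (((j:ℕ):ℝ) + 1), f x := by
  have hsub : Ioo ((j:ℕ):ℝ) (((j:ℕ):ℝ) + 1) ⊆ Ioo 0 3 := by
    have : ((j:ℕ):ℝ) + 1 ≤ 3 := by exact_mod_cast j.isLt
    exact Ioo_subset_Ioo (Nat.cast_nonneg _) this
  rw [proj3, Measure.restrict_restrict measurableSet_Ioo, inter_eq_left.mpr hsub]
  exact integral_congr_ae (ae_restrict_of_ae_restrict_of_subset hsub hu)

lemma exists_proj3_eq_of_mem_dwellSet {p : ℝ≥0∞} {u : Lp ℝ p (volume.restrict (Ioo (0:ℝ) 3))}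
    (hu : u ∈ dwellSet p) :
    ∃ c : ℝ, (c = 0 ∨ c = 1) ∧ ∃ a b : ℝ, 0 ≤ a ∧ a + 3/2 ≤ b ∧
      ∀ j : Fin 3, proj3 p u j = c + (1 - 2 * c) * overlap a b (j:ℕ) ((j:ℕ) + 1) := by
  obtain ⟨c, hc, t, ht0, hgap, hu⟩ := hu
  refine ⟨c, hc, t 0, t 1, ht0 0, by linarith, fun j => ?_⟩
  rw [proj3_apply_of_ae_eq hu, setIntegral_Ioo_switchFun_two c (by linarith) (by linarith)]
  ring

lemma overlap_combination_bounds {a b : ℝ} (ha : 0 ≤ a) (hab : a + 3/2 ≤ b) :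
    -3/4 ≤ overlap a b 0 1 - overlap a b 1 2 + overlap a b 2 3 / 2 ∧
    overlap a b 0 1 - overlap a b 1 2 + overlap a b 2 3 / 2 ≤ 1/2 ∧
    (overlap a b 0 1 - overlap a b 1 2 + overlap a b 2 3 / 2 ≤ -3/4 →
      overlap a b 0 1 = 0 ∧ overlap a b 1 2 = 1 ∧ overlap a b 2 3 = 1/2) := by
  unfold overlap
  grind (splits := 30)

noncomputable def dwellObjective : StrongDual ℝ (Fin 3 → ℝ) :=
  let π : Fin 3 → StrongDual ℝ (Fin 3 → ℝ) := ContinuousLinearMap.proj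
  π 0 - π 1 + (1/2 : ℝ) • π 2

lemma dwellObjective_apply (x : Fin 3 → ℝ) : dwellObjective x = x 0 - x 1 + (1/2) * x 2 := rfl

lemma dwellObjective_unique_min_on_image (p : ℝ≥0∞) :
    ∀ x ∈ proj3 p '' dwellSet p, dwellObjective ![0, 1, 1/2] ≤ dwellObjective x ∧
      (dwellObjective x ≤ dwellObjective ![0, 1, 1/2] → x = ![0, 1, 1/2]) := by
  rintro x ⟨u, hu, rfl⟩
  obtain ⟨c, hc, a, b, ha, hab, hproj⟩ := exists_proj3_eq_of_mem_dwellSet hu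
  obtain ⟨hlow, hupp, hmin⟩ := overlap_combination_bounds ha hab
  have hx : proj3 p u = ![c + (1 - 2 * c) * overlap a b 0 1, c + (1 - 2 * c) * overlap a b 1 2,
      c + (1 - 2 * c) * overlap a b 2 3] := by
    ext j; fin_cases j <;> norm_num [hproj]
  simp only [hx, dwellObjective_apply, Matrix.cons_val_zero, Matrix.cons_val_one,
    Matrix.cons_val_two, Matrix.head_cons, Matrix.tail_cons]
  rcases hc with rfl | rfl
  · refine ⟨by linarith, fun h => ?_⟩
    obtain ⟨h0, h1, h2⟩ := hmin (by linarith)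
    norm_num [h0, h1, h2]
  · exact ⟨by linarith, fun h => absurd h (by linarith)⟩

lemma unique_min_on_convexHull {𝕜 E : Type*} [Field 𝕜] [LinearOrder 𝕜] [IsStrictOrderedRing 𝕜]
    [AddCommGroup E] [Module 𝕜 E] (φ : E →ₗ[𝕜] 𝕜) {S : Set E} {v : E}
    (hS : ∀ x ∈ S, φ v ≤ φ x ∧ (φ x ≤ φ v → x = v)) :
    ∀ x ∈ convexHull 𝕜 S, φ v ≤ φ x ∧ (φ x ≤ φ v → x = v) := by
  suffices Convex 𝕜 {x | φ v ≤ φ x ∧ (φ x ≤ φ v → x = v)} from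
    fun x hx => convexHull_min hS this hx
  rintro x ⟨hx, hxv⟩ y ⟨hy, hyv⟩ a b ha hb hab
  have hφ : φ (a • x + b • y) = a * φ x + b * φ y := by simp
  have hv : φ v = a * φ v + b * φ v := by rw [← add_mul, hab, one_mul]
  refine ⟨by rw [hφ, hv]; gcongr, fun h => ?_⟩
  rw [hφ] at h
  -- a minimizing convex combination puts positive weight only on minimizers
  have hxa : a • x = a • v := by
    rcases ha.eq_or_lt with rfl | ha
    · simp
    · rw [hxv (by nlinarith [mul_le_mul_of_nonneg_left hy hb])]
  have hyb : b • y = b • v := by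
    rcases hb.eq_or_lt with rfl | hb
    · simp
    · rw [hyv (by nlinarith [mul_le_mul_of_nonneg_left hx ha])]
  rw [hxa, hyb, ← add_smul, hab, one_smul]

lemma exists_mem_dwellSet_proj3_eq (p : ℝ≥0∞) : ∃ u ∈ dwellSet p, proj3 p u = ![0, 1, 1/2] := by
  let t : Fin 2 → ℝ := ![1, 5/2]
  have ht : t 0 ≤ t 1 := by norm_num [t]
  have hsw : switchFun 2 0 t = (Ico 1 (5/2)).indicator (1 : ℝ → ℝ) := by
    rw [switchFun_two_eq 0 ht]; ext x; simp [t]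
  have hmem : MemLp ((Ico (1:ℝ) (5/2)).indicator (1 : ℝ → ℝ)) p (volume.restrict (Ioo 0 3)) :=
    memLp_indicator_const p measurableSet_Ico 1 (Or.inr (measure_ne_top _ _))
  have hae : (hmem.toLp _ : ℝ → ℝ) =ᵐ[volume.restrict (Ioo 0 3)] switchFun 2 0 t :=
    hsw.symm ▸ hmem.coeFn_toLp
  refine ⟨hmem.toLp _, ⟨0, Or.inl rfl, t, ?_, by norm_num [t], hae⟩, ?_⟩
  · intro i; fin_cases i <;> norm_num [t]
  · ext j
    rw [proj3_apply_of_ae_eq hae, setIntegral_Ioo_switchFun_two 0 ht (by linarith)]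
    fin_cases j <;> norm_num [overlap, t]

theorem stmt_17_general (p : ℝ≥0∞) :
    (![0, 1, 1/2] : Fin 3 → ℝ) ∈ convexHull ℝ (proj3 p '' dwellSet p) ∧
    (∀ x ∈ convexHull ℝ (proj3 p '' dwellSet p),
      (![0, 1, 1/2] : Fin 3 → ℝ) 0 - (![0, 1, 1/2] : Fin 3 → ℝ) 1 +
          (1/2) * (![0, 1, 1/2] : Fin 3 → ℝ) 2 ≤
        x 0 - x 1 + (1/2) * x 2) ∧
    (∀ x ∈ convexHull ℝ (proj3 p '' dwellSet p),
      x 0 - x 1 + (1/2) * x 2 =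
        (![0, 1, 1/2] : Fin 3 → ℝ) 0 - (![0, 1, 1/2] : Fin 3 → ℝ) 1 +
          (1/2) * (![0, 1, 1/2] : Fin 3 → ℝ) 2 →
      x = ![0, 1, 1/2]) ∧
    (![0, 1, 1/2] : Fin 3 → ℝ) ∈
      Set.extremePoints ℝ (convexHull ℝ (proj3 p '' dwellSet p)) ∧
    ¬ ∃ F : Finset (Fin 3 → ℝ),
        (F : Set (Fin 3 → ℝ)) ⊆ {x | ∀ i, x i = 0 ∨ x i = 1} ∧
        convexHull ℝ (proj3 p '' dwellSet p) = convexHull ℝ (F : Set (Fin 3 → ℝ)) := by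
  obtain ⟨u, hu, hproj⟩ := exists_mem_dwellSet_proj3_eq p
  have hmem : (![0, 1, 1/2] : Fin 3 → ℝ) ∈ convexHull ℝ (proj3 p '' dwellSet p) :=
    subset_convexHull ℝ _ ⟨u, hu, hproj⟩
  have hmin := unique_min_on_convexHull dwellObjective.toLinearMap
    (dwellObjective_unique_min_on_image p)
  have hext : (![0, 1, 1/2] : Fin 3 → ℝ) ∈
      Set.extremePoints ℝ (convexHull ℝ (proj3 p '' dwellSet p)) :=
    exposedPoints_subset_extremePoints ⟨hmem, -dwellObjective, fun y hy => by
      simpa only [neg_apply, neg_le_neg_iff, ContinuousLinearMap.coe_coe] using hmin y hy⟩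
  simp only [ContinuousLinearMap.coe_coe, dwellObjective_apply] at hmin
  refine ⟨hmem, fun x hx => (hmin x hx).1, fun x hx h => (hmin x hx).2 h.le, hext, ?_⟩
  rintro ⟨F, hF01, hF⟩
  rcases hF01 (extremePoints_convexHull_subset (hF ▸ hext)) 2 with h | h <;> simp at h

/-- for `T = 3`, `s = 3/2`, the point `(0,1,1/2)` belongs to
`C_{D_s,Π}` and is the unique minimizer of `x ↦ x₁ - x₂ + x₃/2` over
`C_{D_s,Π}`; in particular `C_{D_s,Π}` has a fractional extreme point and is
not a 0/1-polytope. -/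
theorem stmt_17 (p : ℝ≥0∞) [Fact (1 ≤ p)] (hp : p ≠ ⊤) :
    (![0, 1, 1/2] : Fin 3 → ℝ) ∈ convexHull ℝ (proj3 p '' dwellSet p) ∧
    (∀ x ∈ convexHull ℝ (proj3 p '' dwellSet p),
      (![0, 1, 1/2] : Fin 3 → ℝ) 0 - (![0, 1, 1/2] : Fin 3 → ℝ) 1 +
          (1/2) * (![0, 1, 1/2] : Fin 3 → ℝ) 2 ≤
        x 0 - x 1 + (1/2) * x 2) ∧
    (∀ x ∈ convexHull ℝ (proj3 p '' dwellSet p),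
      x 0 - x 1 + (1/2) * x 2 =
        (![0, 1, 1/2] : Fin 3 → ℝ) 0 - (![0, 1, 1/2] : Fin 3 → ℝ) 1 +
          (1/2) * (![0, 1, 1/2] : Fin 3 → ℝ) 2 →
      x = ![0, 1, 1/2]) ∧
    (![0, 1, 1/2] : Fin 3 → ℝ) ∈
      Set.extremePoints ℝ (convexHull ℝ (proj3 p '' dwellSet p)) ∧
    ¬ ∃ F : Finset (Fin 3 → ℝ),
        (F : Set (Fin 3 → ℝ)) ⊆ {x | ∀ i, x i = 0 ∨ x i = 1} ∧
        convexHull ℝ (proj3 p '' dwellSet p) = convexHull ℝ (F : Set (Fin 3 → ℝ)) :=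
  stmt_17_general p
end
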